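/- arXiv:1503.03032 — 2 statements merged into one kernel-verified Lean document; each statement's English description precedes it below -/
import Mathlib

section
/- For each r ≥ 0, the S-module Ω^r_d = ⊕_{b≥n_r} Ω^r(b) (for any n_r > n), with the deformed action f·_d τ := (b/(b+c))·(fτ + (1/b)·df∧i_Rτ) for homogeneous f ∈ S(c), τ ∈ Ω^r(b), is finitely generated: it is generated over S by its homogeneous component of degree n_r. -/
/-!
Common setup: a concrete model of the exterior algebra `Ω` of differential forms over
`S = ℂ[x₁,…,xₙ]`.  An element of `Ω` is encoded as a function assigning to each subset
`I ⊆ {1,…,n}` the polynomial coefficient of `dx_I = dx_{i₁} ∧ … ∧ dx_{i_r}` (indices in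
increasing order).  The `r`-forms are the elements supported on subsets of cardinality `r`.
-/

open MvPolynomial

noncomputable section

/-- The polynomial ring `S = ℂ[x₁,…,xₙ]`. -/
abbrev S (n : ℕ) : Type := MvPolynomial (Fin n) ℂ

/-- The exterior algebra of differential forms over `S`: a form is given by its coefficient
at each basis monomial `dx_I`, `I ⊆ {1,…,n}`. -/
abbrev Ω (n : ℕ) : Type := Finset (Fin n) → S n

variable {n : ℕ}

/-- The sign `(-1)^{#{(i,j) ∈ I × J : j < i}}` arising when reordering `dx_I ∧ dx_J`. -/
def sgnMerge (I J : Finset (Fin n)) : ℤ :=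
  (-1) ^ (∑ i ∈ I, (J.filter (fun j => j < i)).card)

/-- Exterior (wedge) product of forms. -/
def wedge (μ τ : Ω n) : Ω n :=
  fun K => ∑ I ∈ K.powerset, (sgnMerge I (K \ I) : S n) * μ I * τ (K \ I)

/-- Contraction `i_X` with a vector field `X = Σ_k X_k ∂/∂x_k` (given by its components). -/
def contr (X : Fin n → S n) (τ : Ω n) : Ω n :=
  fun J => ∑ k ∈ Jᶜ, ((-1 : S n) ^ (J.filter (fun j => j < k)).card) * X k * τ (insert k J)

/-- The exterior differential `d`. -/
def extd (τ : Ω n) : Ω n :=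
  fun I => ∑ k ∈ I, ((-1 : S n) ^ (I.filter (fun j => j < k)).card) * pderiv k (τ (I.erase k))

/-- The radial vector field `R = Σ_k x_k ∂/∂x_k`. -/
def radial (n : ℕ) : Fin n → S n := fun k => X k

/-- The unit `1 ∈ Ω⁰`. -/
def oneForm (n : ℕ) : Ω n := fun I => if I = ∅ then 1 else 0

/-- A polynomial regarded as a `0`-form. -/
def ofPoly (f : S n) : Ω n := fun I => if I = ∅ then f else 0

/-- The basic `1`-form `dx_k`. -/
def dx (k : Fin n) : Ω n := fun I => if I = {k} then 1 else 0

/-- `τ` is an `r`-form, i.e. `τ ∈ Ω^r`. -/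
def IsForm (τ : Ω n) (r : ℕ) : Prop := ∀ I : Finset (Fin n), I.card ≠ r → τ I = 0

/-- `τ ∈ Ω^z` for an integer `z` (so `τ = 0` when `z < 0`). -/
def IsFormZ (τ : Ω n) (z : ℤ) : Prop := ∀ I : Finset (Fin n), (I.card : ℤ) ≠ z → τ I = 0

/-- `τ ∈ Ω^r(b)`: an `r`-form, homogeneous of total degree `b`, where each `x_i` and each
`dx_i` has degree `1` (this is the grading by the Lie derivative along the radial field). -/
def IsHomogForm (τ : Ω n) (r b : ℕ) : Prop :=
  IsForm τ r ∧ ∀ (I : Finset (Fin n)) (m : Fin n →₀ ℕ),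
    coeff m (τ I) ≠ 0 → (∑ i ∈ m.support, m i) + I.card = b

/-- The coordinate vector field `∂/∂x_k`. -/
def coordVF (n : ℕ) (k : Fin n) : Fin n → S n := fun j => if j = k then 1 else 0

/-- Contraction `i_L` with a vector valued differential form `L ∈ Ω^{q+1} ⊗_S T`,
encoded by its components `L k ∈ Ω^{q+1}` with respect to the basis `∂/∂x_k` of `T`,
so `L = Σ_k (L k) ⊗ ∂/∂x_k` and `i_L τ = Σ_k (L k) ∧ i_{∂/∂x_k} τ`. -/
def vcontr (L : Fin n → Ω n) (τ : Ω n) : Ω n :=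
  ∑ k : Fin n, wedge (L k) (contr (coordVF n k) τ)

/-- The Lie derivative `L_K = [i_K, d] = i_K ∘ d + (-1)^q d ∘ i_K` with respect to a vector
valued form `K ∈ Ω^q ⊗_S T` (here `i_K` has degree `q - 1` and `d` has degree `1`). -/
def lieD (q : ℤ) (K : Fin n → Ω n) (τ : Ω n) : Ω n :=
  vcontr K (extd τ) + ((-1 : ℂ) ^ q) • extd (vcontr K τ)

/-- The identity vector valued `1`-form `Id = Σ_k dx_k ⊗ ∂/∂x_k ∈ Ω¹ ⊗_S T`. -/
def idVF (n : ℕ) : Fin n → Ω n := fun k => dx k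

/-- `D : Ω → Ω` is a (ℂ-linear) derivation of degree `q`. -/
structure IsDerivationOfDegree (D : Ω n → Ω n) (q : ℤ) : Prop where
  map_add : ∀ μ τ : Ω n, D (μ + τ) = D μ + D τ
  map_smul : ∀ (a : ℂ) (τ : Ω n), D (a • τ) = a • D τ
  map_degree : ∀ (r : ℕ) (τ : Ω n), IsForm τ r → IsFormZ (D τ) ((r : ℤ) + q)
  leibniz : ∀ (r : ℕ) (μ τ : Ω n), IsForm μ r →
    D (wedge μ τ) = wedge (D μ) τ + ((-1 : ℂ) ^ ((r : ℤ) * q)) • wedge μ (D τ)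

/-- `D : Ω → Ω` is a differential operator of order `1` and degree `q`, i.e. a ℂ-linear
map of degree `q` with `[[D, λ_μ], λ_τ] = 0` for all `μ, τ ∈ Ω` (stated on homogeneous
`μ ∈ Ω^r`, `τ ∈ Ω^s`, with the graded commutator signs). -/
structure IsDiffOpOfDegree (D : Ω n → Ω n) (q : ℤ) : Prop where
  map_add : ∀ μ τ : Ω n, D (μ + τ) = D μ + D τ
  map_smul : ∀ (a : ℂ) (τ : Ω n), D (a • τ) = a • D τ
  map_degree : ∀ (r : ℕ) (τ : Ω n), IsForm τ r → IsFormZ (D τ) ((r : ℤ) + q)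
  order_one : ∀ (r s : ℕ) (μ τ : Ω n), IsForm μ r → IsForm τ s → ∀ σ : Ω n,
    D (wedge μ (wedge τ σ)) - ((-1 : ℂ) ^ (q * (r : ℤ))) • wedge μ (D (wedge τ σ)) -
      ((-1 : ℂ) ^ ((q + (r : ℤ)) * (s : ℤ))) •
        (wedge τ (D (wedge μ σ)) - ((-1 : ℂ) ^ (q * (r : ℤ))) • wedge τ (wedge μ (D σ))) = 0

/-- The deformed action `f · τ = α(r,b,c)·fτ + β(r,b,c)·df ∧ i_R τ` of a homogeneous
polynomial `f ∈ S(c)` on `τ ∈ Ω^r(b)`, for given scalar families `α`, `β`. -/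
def defAct (α β : ℕ → ℕ → ℕ → ℂ) (r b c : ℕ) (f : S n) (τ : Ω n) : Ω n :=
  α r b c • (f • τ) + β r b c • wedge (extd (ofPoly f)) (contr (radial n) τ)

/-- The differential operator `ω̃₁ ∧ L_Id + ω̃₂ ∧ i_Id + λ_μ̃`, evaluated on `τ ∈ Ω^r`:
`τ ↦ ω̃₁ ∧ dτ + r · ω̃₂ ∧ τ + μ̃ ∧ τ`. -/
def opId (ω₁ ω₂ μ : Ω n) (r : ℕ) (τ : Ω n) : Ω n :=
  wedge ω₁ (extd τ) + (r : ℂ) • wedge ω₂ τ + wedge μ τ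

/-- The quantity `b - a·(r/q + (-1)^q t)`. -/
def denomA (q a : ℕ) (t : ℂ) (r b : ℕ) : ℂ :=
  (b : ℂ) - (a : ℂ) * ((r : ℂ) / (q : ℂ) + (-1 : ℂ) ^ q * t)

/-- `α(r,b,c) = (b - a(r/q + (-1)^q t)) / (b + c - a(r/q + (-1)^q t))`. -/
def alphaA (q a : ℕ) (t : ℂ) (r b c : ℕ) : ℂ :=
  denomA q a t r b / (denomA q a t r b + (c : ℂ))

/-- `β(r,b,c) = α(r,b,c) / (b - a(r/q + (-1)^q t))`. -/
def betaA (q a : ℕ) (t : ℂ) (r b c : ℕ) : ℂ :=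
  alphaA q a t r b c / denomA q a t r b

/-- A linearizable differential operator
`D = ω₁ ∧ L_Id + ((1/q)dω₁ + ω₂) ∧ i_Id + (t·λ_{dω₁} + λ_μ)`, evaluated on `τ ∈ Ω^r`. -/
def linOp (q : ℕ) (t : ℂ) (ω₁ ω₂ μ : Ω n) (r : ℕ) (τ : Ω n) : Ω n :=
  wedge ω₁ (extd τ) + (r : ℂ) • wedge ((q : ℂ)⁻¹ • extd ω₁ + ω₂) τ +
    wedge (t • extd ω₁ + μ) τ

/-- The deformed action linearizing the exterior differential:
`f ·_d τ = (b/(b+c))·(fτ + (1/b)·df ∧ i_R τ)`, with `f ·_d τ = fτ` when `b = 0`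
(in particular when `b = c = 0`). -/
def dotdT (b c : ℕ) (f : S n) (τ : Ω n) : Ω n :=
  if b = 0 then f • τ
  else ((b : ℂ) / ((b : ℂ) + (c : ℂ))) •
    (f • τ + ((b : ℂ))⁻¹ • wedge (extd (ofPoly f)) (contr (radial n) τ))

/-- The deformed action linearizing the exterior differential:
`f ·_d τ = (b/(b+c))·(fτ + (1/b)·df ∧ i_R τ)`, with the usual product when `b = c = 0`. -/
def dotd (b c : ℕ) (f : S n) (τ : Ω n) : Ω n :=
  if b = 0 ∧ c = 0 then f • τ
  else ((b : ℂ) / ((b : ℂ) + (c : ℂ))) •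
    (f • τ + ((b : ℂ))⁻¹ • wedge (extd (ofPoly f)) (contr (radial n) τ))

/-- `κ(r) = (r+1)/2`. -/
def kapC (r : ℕ) : ℂ := ((r : ℂ) + 1) / 2

/-- The differential operator `ω△ : Ω^r → Ω^{r+2}`, `ω△τ = ω ∧ dτ + κ(r)·dω ∧ τ`. -/
def triOp (ω : Ω n) (r : ℕ) (τ : Ω n) : Ω n :=
  wedge ω (extd τ) + kapC r • wedge (extd ω) τ

/-- The deformed action linearizing `ω△`:
`f ·_{ω△} τ = (1/(b+c-κ(r)a))·[(b-κ(r)a)·fτ + df ∧ i_R τ]`. -/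
def triAct (a r b c : ℕ) (f : S n) (τ : Ω n) : Ω n :=
  ((b : ℂ) + (c : ℂ) - kapC r * (a : ℂ))⁻¹ •
    (((b : ℂ) - kapC r * (a : ℂ)) • (f • τ) + wedge (extd (ofPoly f)) (contr (radial n) τ))

/-- The Lie derivative `L_X ω = i_X (dω) + d (i_X ω)` along a vector field `X`. -/
def lieVF (X : Fin n → S n) (ω : Ω n) : Ω n := contr X (extd ω) + extd (contr X ω)

end

/-!
For `τ ∈ Ω^r(b+1)` the forms `∂ᵢτ` (coefficientwise partial derivatives) lie in `Ω^r(b)`.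
Euler's identity `Σ xᵢ ∂ᵢτ = (b+1-r) τ`, the identity `Σ dxᵢ ∧ i_R ∂ᵢτ = d i_R τ - r τ` and
Cartan's formula `d i_R + i_R d = b+1` on `Ω(b+1)` combine to
`Σ xᵢ ·_d ∂ᵢτ = (b+1-r) τ - (b+1)⁻¹ i_R dτ`.
For `χ = i_R dτ` we have `i_R χ = 0`, so `i_R dχ = (b+1) χ` and the same identity gives
`(b-r) χ`. Since `r ≤ n < b`, both `χ` and then `τ` lie in every subspace containing all
`xᵢ ·_d σ` with `σ ∈ Ω^r(b)`; induction on `b ≥ n_r` concludes.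
-/

noncomputable section

variable {n : ℕ}

def pderivForm (i : Fin n) (τ : Ω n) : Ω n := fun I => pderiv i (τ I)

lemma neg_one_pow_mul_self (a : ℕ) : (-1 : S n) ^ a * (-1 : S n) ^ a = 1 := by
  rw [← pow_add]
  exact Even.neg_one_pow ⟨a, rfl⟩

lemma filter_erase_lt_self (K : Finset (Fin n)) (i : Fin n) :
    (K.erase i).filter (· < i) = K.filter (· < i) := by
  ext j
  simp only [Finset.mem_filter, Finset.mem_erase]
  exact ⟨fun h => ⟨h.1.2, h.2⟩, fun h => ⟨⟨h.2.ne, h.1⟩, h.2⟩⟩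

lemma contr_sum {ι : Type*} (s : Finset ι) (V : Fin n → S n) (f : ι → Ω n) :
    contr V (∑ i ∈ s, f i) = ∑ i ∈ s, contr V (f i) := by
  funext J
  simp only [contr, Finset.sum_apply, Finset.mul_sum]
  rw [Finset.sum_comm]

lemma wedge_sub_right (μ σ τ : Ω n) : wedge μ (σ - τ) = wedge μ σ - wedge μ τ := by
  funext K
  simp only [wedge, Pi.sub_apply, mul_sub, Finset.sum_sub_distrib]

lemma extd_zero : extd (0 : Ω n) = 0 := by
  funext I
  simp [extd]

lemma extd_ofPoly_X (i : Fin n) : extd (ofPoly (X i : S n)) = dx i := by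
  funext I
  unfold extd ofPoly dx
  by_cases hI : I = {i}
  · subst hI
    simp [Finset.filter_singleton]
  · rw [if_neg hI]
    refine Finset.sum_eq_zero fun k hk => ?_
    by_cases he : I.erase k = ∅
    · have hki : k ≠ i := by
        rintro rfl
        exact hI ((Finset.erase_eq_empty_iff I k).1 he |>.resolve_left (Finset.ne_empty_of_mem hk))
      rw [if_pos he, pderiv_X_of_ne hki.symm, mul_zero]
    · rw [if_neg he, map_zero, mul_zero]

lemma wedge_dx_apply (i : Fin n) (μ : Ω n) (K : Finset (Fin n)) :
    wedge (dx i) μ K =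
      if i ∈ K then (-1 : S n) ^ (K.filter (· < i)).card * μ (K.erase i) else 0 := by
  unfold wedge dx sgnMerge
  rw [Finset.sum_congr rfl (g := fun I => if I = {i} then
      (((-1 : ℤ) ^ (∑ x ∈ I, ((K \ I).filter (· < x)).card) : ℤ) : S n) * μ (K \ I) else 0)
    (fun I _ => by split <;> simp_all), Finset.sum_ite_eq' K.powerset {i}]
  by_cases h : i ∈ K
  · rw [if_pos (by simpa using h), if_pos h, Finset.sum_singleton, ← Finset.erase_eq,
      filter_erase_lt_self]
    push_cast
    ring
  · rw [if_neg (by simpa using h), if_neg h]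

lemma contr_coordVF_apply (i : Fin n) (τ : Ω n) (J : Finset (Fin n)) :
    contr (coordVF n i) τ J =
      if i ∈ Jᶜ then (-1 : S n) ^ (J.filter (· < i)).card * τ (insert i J) else 0 := by
  unfold contr coordVF
  rw [Finset.sum_congr rfl (g := fun k =>
      if k = i then (-1 : S n) ^ (J.filter (· < k)).card * τ (insert k J) else 0)
    (fun k _ => by split <;> simp_all), Finset.sum_ite_eq' Jᶜ i]

lemma sum_wedge_dx_pderivForm (τ : Ω n) : ∑ i, wedge (dx i) (pderivForm i τ) = extd τ := by
  funext K
  simp only [Finset.sum_apply, wedge_dx_apply, pderivForm]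
  rw [Finset.sum_ite_mem, Finset.univ_inter]
  rfl

lemma sum_wedge_dx_contr_coordVF_apply (τ : Ω n) (K : Finset (Fin n)) :
    (∑ i, wedge (dx i) (contr (coordVF n i) τ)) K = K.card • τ K := by
  have h : ∀ i, wedge (dx i) (contr (coordVF n i) τ) K = if i ∈ K then τ K else 0 := by
    intro i
    rw [wedge_dx_apply]
    by_cases hi : i ∈ K
    · rw [if_pos hi, if_pos hi, contr_coordVF_apply,
        if_pos (Finset.mem_compl.2 (Finset.notMem_erase i K)), Finset.insert_erase hi,
        filter_erase_lt_self, ← mul_assoc, neg_one_pow_mul_self, one_mul]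
    · rw [if_neg hi, if_neg hi]
  rw [Finset.sum_apply, Finset.sum_congr rfl fun i _ => h i, Finset.sum_ite_mem,
    Finset.univ_inter, Finset.sum_const]

lemma pderivForm_contr (i : Fin n) (V : Fin n → S n) (τ : Ω n) :
    pderivForm i (contr V τ) = contr (fun k => pderiv i (V k)) τ + contr V (pderivForm i τ) := by
  funext J
  simp only [pderivForm, contr, Pi.add_apply, map_sum, ← Finset.sum_add_distrib]
  refine Finset.sum_congr rfl fun k _ => ?_
  rw [show (-1 : S n) ^ (J.filter (· < k)).card = C ((-1) ^ (J.filter (· < k)).card) by simp,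
    mul_assoc, pderiv_C_mul, pderiv_mul]
  ring

lemma pderiv_radial (i : Fin n) : (fun k => pderiv i (radial n k)) = coordVF n i := by
  funext k
  simp [radial, coordVF, pderiv_X, Pi.single_apply]

lemma neg_one_pow_card_filter_insert_swap {J : Finset (Fin n)} {k l : Fin n} (hk : k ∉ J)
    (hl : l ∉ J) (hkl : k ≠ l) :
    (-1 : S n) ^ (J.filter (· < k)).card * (-1) ^ ((insert k J).filter (· < l)).card =
      -((-1) ^ (J.filter (· < l)).card * (-1) ^ ((insert l J).filter (· < k)).card) := by
  rw [Finset.filter_insert, Finset.filter_insert]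
  rcases lt_or_gt_of_ne hkl with h | h
  · rw [if_pos h, if_neg (lt_asymm h),
      Finset.card_insert_of_notMem (fun h => hk (Finset.mem_of_mem_filter _ h)), pow_succ]
    ring
  · rw [if_neg (lt_asymm h), if_pos h,
      Finset.card_insert_of_notMem (fun h => hl (Finset.mem_of_mem_filter _ h)), pow_succ]
    ring

lemma contr_wedge_dx_apply_of_mem (V : Fin n → S n) {i : Fin n} {J : Finset (Fin n)}
    (hi : i ∈ J) (σ : Ω n) :
    contr V (wedge (dx i) σ) J = V i * σ J - wedge (dx i) (contr V σ) J := by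
  have key : ∀ k ∈ Jᶜ, (-1 : S n) ^ (J.filter (· < k)).card * V k * wedge (dx i) σ (insert k J)
      = -((-1 : S n) ^ (J.filter (· < i)).card *
          ((-1 : S n) ^ ((J.erase i).filter (· < k)).card * V k * σ (insert k (J.erase i)))) := by
    intro k hk
    have hkJ : k ∉ J := Finset.mem_compl.1 hk
    have hki : k ≠ i := fun h => hkJ (h ▸ hi)
    have hsign := neg_one_pow_card_filter_insert_swap (n := n)
      (fun h => hkJ (Finset.mem_of_mem_erase h)) (Finset.notMem_erase i J) hki
    rw [Finset.insert_erase hi, filter_erase_lt_self] at hsign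
    rw [wedge_dx_apply, if_pos (Finset.mem_insert_of_mem hi),
      ← filter_erase_lt_self (insert k J) i, Finset.erase_insert_of_ne hki]
    set a := (-1 : S n) ^ (J.filter (· < k)).card
    set b := (-1 : S n) ^ ((insert k (J.erase i)).filter (· < i)).card
    set c := (-1 : S n) ^ (J.filter (· < i)).card
    set d := (-1 : S n) ^ ((J.erase i).filter (· < k)).card
    have ha : a * a = 1 := neg_one_pow_mul_self _
    have hd : d * d = 1 := neg_one_pow_mul_self _
    linear_combination V k * σ (insert k (J.erase i)) * (a * d * hsign - a * b * hd - c * d * ha)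
  have hC : contr V σ (J.erase i) = ∑ k ∈ insert i Jᶜ,
      (-1 : S n) ^ ((J.erase i).filter (· < k)).card * V k * σ (insert k (J.erase i)) := by
    rw [contr, Finset.compl_erase]
  rw [contr, Finset.sum_congr rfl key, Finset.sum_neg_distrib, wedge_dx_apply, if_pos hi, hC,
    Finset.sum_insert (by simp [hi]), Finset.insert_erase hi, filter_erase_lt_self, mul_add,
    ← mul_assoc, ← mul_assoc, neg_one_pow_mul_self, one_mul, Finset.mul_sum]
  ring

lemma contr_wedge_dx_apply_of_notMem (V : Fin n → S n) {i : Fin n} {J : Finset (Fin n)}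
    (hi : i ∉ J) (σ : Ω n) :
    contr V (wedge (dx i) σ) J = V i * σ J - wedge (dx i) (contr V σ) J := by
  have key : ∀ k ∈ Jᶜ, (-1 : S n) ^ (J.filter (· < k)).card * V k * wedge (dx i) σ (insert k J)
      = if k = i then V i * σ J else 0 := by
    intro k _
    rw [wedge_dx_apply]
    by_cases hki : k = i
    · subst hki
      rw [if_pos rfl, if_pos (Finset.mem_insert_self k J), Finset.erase_insert hi,
        Finset.filter_insert, if_neg (lt_irrefl k)]
      linear_combination (V k * σ J) * neg_one_pow_mul_self (J.filter (· < k)).card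
    · have hii : i ∉ insert k J := by
        rw [Finset.mem_insert, not_or]
        exact ⟨Ne.symm hki, hi⟩
      rw [if_neg hii, if_neg hki, mul_zero]
  rw [contr, Finset.sum_congr rfl key, Finset.sum_ite_eq' Jᶜ i, if_pos (Finset.mem_compl.2 hi),
    wedge_dx_apply, if_neg hi, sub_zero]

lemma contr_wedge_dx (V : Fin n → S n) (i : Fin n) (σ : Ω n) :
    contr V (wedge (dx i) σ) = V i • σ - wedge (dx i) (contr V σ) := by
  funext J
  by_cases hi : i ∈ J
  · exact contr_wedge_dx_apply_of_mem V hi σ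
  · exact contr_wedge_dx_apply_of_notMem V hi σ

lemma contr_contr_self (V : Fin n → S n) (τ : Ω n) : contr V (contr V τ) = 0 := by
  funext J
  have hinner : ∀ k ∈ Jᶜ, (-1 : S n) ^ (J.filter (· < k)).card * V k * contr V τ (insert k J) =
      ∑ l ∈ Jᶜ.erase k, (-1 : S n) ^ (J.filter (· < k)).card * V k *
        ((-1) ^ ((insert k J).filter (· < l)).card * V l * τ (insert l (insert k J))) := by
    intro k _
    rw [contr, Finset.compl_insert, Finset.mul_sum]
  rw [Pi.zero_apply, contr, Finset.sum_congr rfl hinner, Finset.sum_sigma']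
  refine Finset.sum_involution (fun p _ => ⟨p.2, p.1⟩) ?_ ?_ ?_ fun _ _ => rfl
  · rintro ⟨k, l⟩ hp
    obtain ⟨hk, hl⟩ := Finset.mem_sigma.1 hp
    have hlk : l ≠ k := Finset.ne_of_mem_erase hl
    have hlJ : l ∉ J := Finset.mem_compl.1 (Finset.mem_of_mem_erase hl)
    have hsign := neg_one_pow_card_filter_insert_swap (n := n) (Finset.mem_compl.1 hk) hlJ hlk.symm
    rw [Finset.insert_comm l k J]
    linear_combination (V k * V l * τ (insert k (insert l J))) * hsign
  · rintro ⟨k, l⟩ hp _ h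
    exact Finset.ne_of_mem_erase (Finset.mem_sigma.1 hp).2 (congrArg Sigma.fst h)
  · rintro ⟨k, l⟩ hp
    obtain ⟨hk, hl⟩ := Finset.mem_sigma.1 hp
    exact Finset.mem_sigma.2 ⟨Finset.mem_of_mem_erase hl,
      Finset.mem_erase.2 ⟨(Finset.ne_of_mem_erase hl).symm, hk⟩⟩

section Forms

variable {τ : Ω n} {r b : ℕ}

lemma IsForm.eq_zero_of_lt (h : IsForm τ r) (hr : n < r) : τ = 0 :=
  funext fun I => h I ((I.card_le_univ.trans_eq (Fintype.card_fin n)).trans_lt hr).ne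

lemma isHomogForm_zero (r b : ℕ) : IsHomogForm (0 : Ω n) r b :=
  ⟨fun _ _ => rfl, fun _ _ h => absurd (coeff_zero _) h⟩

lemma isHomogForm_pderivForm (i : Fin n) (h : IsHomogForm τ r (b + 1)) :
    IsHomogForm (pderivForm i τ) r b := by
  refine ⟨fun I hI => by rw [pderivForm, h.1 I hI, map_zero], fun I m hm => ?_⟩
  rw [pderivForm, coeff_pderiv] at hm
  have := h.2 I _ (left_ne_zero_of_mul hm)
  simp only [← Finsupp.degree_apply, map_add, Finsupp.degree_single] at this ⊢
  omega

lemma isHomogForm_extd (h : IsHomogForm τ r b) : IsHomogForm (extd τ) (r + 1) b := by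
  constructor
  · intro I hI
    refine Finset.sum_eq_zero fun k hk => ?_
    have : (I.erase k).card ≠ r := by
      have := Finset.card_pos.2 ⟨k, hk⟩
      rw [Finset.card_erase_of_mem hk]
      omega
    rw [h.1 _ this, map_zero, mul_zero]
  · intro I m hm
    rw [extd, coeff_sum] at hm
    obtain ⟨k, hk, hne⟩ := Finset.exists_ne_zero_of_sum_ne_zero hm
    rw [show (-1 : S n) ^ (I.filter (· < k)).card = C ((-1) ^ (I.filter (· < k)).card) by simp,
      coeff_C_mul, coeff_pderiv] at hne
    have := h.2 _ _ (left_ne_zero_of_mul (right_ne_zero_of_mul hne))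
    simp only [← Finsupp.degree_apply, map_add, Finsupp.degree_single,
      Finset.card_erase_of_mem hk] at this ⊢
    have := Finset.card_pos.2 ⟨k, hk⟩
    omega

lemma isHomogForm_contr_radial (h : IsHomogForm τ (r + 1) b) :
    IsHomogForm (contr (radial n) τ) r b := by
  constructor
  · intro J hJ
    refine Finset.sum_eq_zero fun k hk => ?_
    have : (insert k J).card ≠ r + 1 := by
      rw [Finset.card_insert_of_notMem (Finset.mem_compl.1 hk)]
      omega
    rw [h.1 _ this, mul_zero]
  · intro J m hm
    rw [contr, coeff_sum] at hm
    obtain ⟨k, hk, hne⟩ := Finset.exists_ne_zero_of_sum_ne_zero hm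
    rw [show (-1 : S n) ^ (J.filter (· < k)).card = C ((-1) ^ (J.filter (· < k)).card) by simp,
      mul_assoc, coeff_C_mul, radial, coeff_X_mul'] at hne
    have hkm : k ∈ m.support := by
      by_contra hkm
      simp [hkm] at hne
    rw [if_pos hkm] at hne
    have := h.2 _ _ (right_ne_zero_of_mul hne)
    have hle : Finsupp.single k 1 ≤ m :=
      Finsupp.single_le_iff.2 (Nat.one_le_iff_ne_zero.2 (Finsupp.mem_support_iff.1 hkm))
    rw [← tsub_add_cancel_of_le hle]
    simp only [← Finsupp.degree_apply, map_add, Finsupp.degree_single,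
      Finset.card_insert_of_notMem (Finset.mem_compl.1 hk)] at this ⊢
    omega

lemma IsHomogForm.isHomogeneous_apply (h : IsHomogForm τ r b) (I : Finset (Fin n)) :
    (τ I).IsHomogeneous (b - r) := by
  intro m hm
  have hI : I.card = r := by
    by_contra hI
    exact hm (by rw [h.1 I hI, coeff_zero])
  have := h.2 I m hm
  rw [← Finsupp.degree_apply] at this
  rw [show Finsupp.weight 1 m = Finsupp.degree m by rw [Finsupp.degree_eq_weight_one]; rfl]
  omega

lemma IsHomogForm.sum_X_smul_pderivForm (h : IsHomogForm τ r b) :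
    ∑ i, (X i : S n) • pderivForm i τ = ((b : ℂ) - r) • τ := by
  funext I
  simp only [Finset.sum_apply, Pi.smul_apply, smul_eq_mul, pderivForm]
  by_cases h0 : τ I = 0
  · simp [h0]
  obtain ⟨m, hm⟩ := MvPolynomial.ne_zero_iff.1 h0
  have hI : I.card = r := by
    by_contra hI
    exact h0 (h.1 I hI)
  have hrb : r ≤ b := by
    have := h.2 I m hm
    omega
  rw [(h.isHomogeneous_apply I).sum_X_mul_pderiv, ← Nat.cast_smul_eq_nsmul ℂ, Nat.cast_sub hrb]

lemma IsForm.sum_wedge_dx_contr_coordVF (h : IsForm τ r) :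
    ∑ i, wedge (dx i) (contr (coordVF n i) τ) = (r : ℂ) • τ := by
  funext K
  rw [sum_wedge_dx_contr_coordVF_apply, Pi.smul_apply]
  by_cases hK : K.card = r
  · rw [hK, ← Nat.cast_smul_eq_nsmul ℂ]
  · rw [h K hK, smul_zero, smul_zero]

lemma IsForm.sum_wedge_dx_contr_radial_pderivForm (h : IsForm τ r) :
    ∑ i, wedge (dx i) (contr (radial n) (pderivForm i τ)) =
      extd (contr (radial n) τ) - (r : ℂ) • τ := by
  have hi : ∀ i, contr (radial n) (pderivForm i τ) =
      pderivForm i (contr (radial n) τ) - contr (coordVF n i) τ := by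
    intro i
    rw [pderivForm_contr, pderiv_radial]
    abel
  simp only [hi, wedge_sub_right, Finset.sum_sub_distrib, sum_wedge_dx_pderivForm,
    h.sum_wedge_dx_contr_coordVF]

theorem IsHomogForm.extd_contr_radial_add_contr_radial_extd (h : IsHomogForm τ r b) :
    extd (contr (radial n) τ) + contr (radial n) (extd τ) = (b : ℂ) • τ := by
  have hd : contr (radial n) (extd τ) =
      ((b : ℂ) - r) • τ - (extd (contr (radial n) τ) - (r : ℂ) • τ) := by
    rw [← sum_wedge_dx_pderivForm τ, contr_sum]
    simp only [contr_wedge_dx, Finset.sum_sub_distrib]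
    rw [← h.sum_X_smul_pderivForm, ← h.1.sum_wedge_dx_contr_radial_pderivForm]
    rfl
  rw [hd]
  module

lemma dotd_one_X (b : ℕ) (i : Fin n) (σ : Ω n) :
    dotd b 1 (X i) σ =
      ((b : ℂ) / (b + 1)) • ((X i : S n) • σ + (b : ℂ)⁻¹ • wedge (dx i) (contr (radial n) σ)) := by
  rw [dotd, if_neg (by simp), extd_ofPoly_X, Nat.cast_one]

theorem IsHomogForm.sum_dotd_X_pderivForm (hb : b ≠ 0) (h : IsHomogForm τ r (b + 1)) :
    ∑ i, dotd b 1 (X i) (pderivForm i τ) =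
      ((b : ℂ) + 1 - r) • τ - ((b : ℂ) + 1)⁻¹ • contr (radial n) (extd τ) := by
  have hb' : (b : ℂ) ≠ 0 := Nat.cast_ne_zero.2 hb
  have hb1 : (b : ℂ) + 1 ≠ 0 := Nat.cast_add_one_ne_zero b
  simp only [dotd_one_X, ← Finset.smul_sum, Finset.sum_add_distrib]
  rw [h.sum_X_smul_pderivForm, h.1.sum_wedge_dx_contr_radial_pderivForm,
    eq_sub_of_add_eq h.extd_contr_radial_add_contr_radial_extd]
  push_cast
  match_scalars <;> field_simp

theorem mem_of_forall_dotd_X_mem (M : Submodule ℂ (Ω n)) (hrb : r < b)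
    (hM : ∀ (i : Fin n) (σ : Ω n), IsHomogForm σ r b → dotd b 1 (X i) σ ∈ M)
    (hτ : IsHomogForm τ r (b + 1)) : τ ∈ M := by
  have hb : b ≠ 0 := by omega
  have hT : ∀ σ, IsHomogForm σ r (b + 1) → ∑ i, dotd b 1 (X i) (pderivForm i σ) ∈ M :=
    fun σ hσ => M.sum_mem fun i _ => hM i _ (isHomogForm_pderivForm i hσ)
  set χ := contr (radial n) (extd τ)
  have hχ : IsHomogForm χ r (b + 1) := isHomogForm_contr_radial (isHomogForm_extd hτ)
  have hχd : contr (radial n) (extd χ) = ((b : ℂ) + 1) • χ := by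
    have := hχ.extd_contr_radial_add_contr_radial_extd
    rwa [contr_contr_self, extd_zero, zero_add, Nat.cast_add_one] at this
  have hχM : χ ∈ M := by
    have hTχ := hT χ hχ
    rw [hχ.sum_dotd_X_pderivForm hb, hχd, smul_smul,
      inv_mul_cancel₀ (Nat.cast_add_one_ne_zero b), ← sub_smul] at hTχ
    refine (M.smul_mem_iff ?_).1 hTχ
    rw [add_sub_right_comm, add_sub_cancel_right, sub_ne_zero, Ne, Nat.cast_inj]
    omega
  have hτ_eq : τ = ((b : ℂ) + 1 - r)⁻¹ •
      (∑ i, dotd b 1 (X i) (pderivForm i τ) + ((b : ℂ) + 1)⁻¹ • χ) := by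
    have hbr : (b : ℂ) + 1 - r ≠ 0 := by
      rw [← Nat.cast_add_one, sub_ne_zero, Ne, Nat.cast_inj]
      omega
    rw [hτ.sum_dotd_X_pderivForm hb, sub_add_cancel, smul_smul, inv_mul_cancel₀ hbr, one_smul]
  rw [hτ_eq]
  exact M.smul_mem _ (M.add_mem (hT τ hτ) (M.smul_mem _ hχM))

end Forms

end

/-- For each `r ≥ 0` and any `n_r > n`, the `S`-module
`Ω^r_d = ⊕_{b ≥ n_r} Ω^r(b)` with the deformed action
`f ·_d τ = (b/(b+c))·(fτ + (1/b)·df∧i_Rτ)` is generated over `S` by its homogeneous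
component of degree `n_r`: every `τ ∈ Ω^r(b)` with `b ≥ n_r` belongs to any set
containing `Ω^r(n_r)` that is closed under addition, `ℂ`-scalar multiplication and the
deformed action of homogeneous polynomials. -/
theorem dotd_module_finitely_generated (n r nr : ℕ) (hnr : n < nr)
    (b : ℕ) (hb : nr ≤ b) (τ : Ω n) (hτ : IsHomogForm τ r b) :
    ∀ P : Set (Ω n),
      (∀ σ : Ω n, IsHomogForm σ r nr → σ ∈ P) →
      (∀ σ₁ σ₂ : Ω n, σ₁ ∈ P → σ₂ ∈ P → σ₁ + σ₂ ∈ P) →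
      (∀ (z : ℂ) (σ : Ω n), σ ∈ P → z • σ ∈ P) →
      (∀ (c b' : ℕ) (f : S n) (σ : Ω n), f.IsHomogeneous c → IsHomogForm σ r b' →
        nr ≤ b' → σ ∈ P → dotd b' c f σ ∈ P) →
      τ ∈ P := by
  intro P hbase hadd hsmul hact
  let M : Submodule ℂ (Ω n) :=
    { carrier := P
      add_mem' := hadd _ _
      zero_mem' := hbase 0 (isHomogForm_zero r nr)
      smul_mem' := hsmul }
  change τ ∈ M
  induction b, hb using Nat.le_induction generalizing τ with
  | base => exact hbase τ hτ
  | succ b hnrb ih =>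
    by_cases hrn : n < r
    · exact hτ.1.eq_zero_of_lt hrn ▸ M.zero_mem
    · exact mem_of_forall_dotd_X_mem M (by omega)
        (fun i σ hσ => hact 1 b (X i) σ (isHomogeneous_X ℂ i) hσ hnrb (ih σ hσ)) hτ
end

section
/- Let ω ∈ Ω¹(a) with i_Rω = 0 and ω∧dω = 0, and define the 0-th differential ω△X := L_Xω = i_X(dω) + d(i_Xω) for a vector field X. For homogeneous f ∈ S(c) and X ∈ T(b) with b ≥ 1, define f·X := (b/(b+c))·fX, and on 1-forms define f·_{ω△} τ := (1/(b'+c−a))·[(b'−a)·fτ + df∧i_Rτ] for τ ∈ Ω¹(b') with b' > a (this is the ω△-action with κ(1) = 1). Then ω△ is linear for these actions: L_{f·X}(ω) = f·_{ω△}(L_Xω), i.e. (b/(b+c))·L_{fX}(ω) = (1/(b+c))·[b·f·L_Xω + df∧i_R(L_Xω)], where L_Xω ∈ Ω¹(a+b). -/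
/-!
Common setup: a concrete model of the exterior algebra `Ω` of differential forms over
`S = ℂ[x₁,…,xₙ]`.  An element of `Ω` is encoded as a function assigning to each subset
`I ⊆ {1,…,n}` the polynomial coefficient of `dx_I = dx_{i₁} ∧ … ∧ dx_{i_r}` (indices in
increasing order).  The `r`-forms are the elements supported on subsets of cardinality `r`.
-/

open MvPolynomial

/-!
Put `g = i_X ω`. Since `ω` is a `1`-form, `L_{fX} ω = f · L_X ω + g · df`, so everything
reduces to `i_R (L_X ω) = b · g`. By Cartan, `i_R i_X dω = -i_X i_R dω`, and
`i_R dω = L_R ω - d(i_R ω) = a · ω` because `ω` has weight `a` and `i_R ω = 0`; hence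
`i_R i_X dω = -a · g`, while `i_R dg = (a + b) · g` by Euler's identity, `g` having weight
`a + b`. Both sides of the claim are then `(b/(b+c)) · (f · L_X ω + g · df)`.
-/

open MvPolynomial Finset

variable {n : ℕ}

lemma isForm_ofPoly (g : S n) : IsForm (ofPoly g) 0 := by
  intro I hI
  simp [ofPoly, show I ≠ ∅ by rintro rfl; simp at hI]

lemma IsForm.extd {τ : Ω n} {r : ℕ} (hτ : IsForm τ r) : IsForm (extd τ) (r + 1) := by
  intro I hI
  refine sum_eq_zero fun k hk => ?_
  have := card_ne_zero_of_mem hk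
  rw [hτ _ (by rw [card_erase_of_mem hk]; omega), map_zero, mul_zero]

lemma IsForm.contr {τ : Ω n} {r : ℕ} (hτ : IsForm τ (r + 1)) (Y : Fin n → S n) :
    IsForm (contr Y τ) r := by
  intro J hJ
  refine sum_eq_zero fun k hk => ?_
  rw [hτ _ (by rw [card_insert_of_notMem (mem_compl.mp hk)]; omega), mul_zero]

lemma contr_eq_ofPoly_of_isForm_one {τ : Ω n} (hτ : IsForm τ 1) (Y : Fin n → S n) :
    contr Y τ = ofPoly (∑ k, Y k * τ {k}) := by
  funext J
  rcases eq_or_ne J ∅ with rfl | hJ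
  · simp [contr, ofPoly]
  · simp only [ofPoly, hJ, if_false, contr]
    refine sum_eq_zero fun k hk => ?_
    rw [hτ _ ?_, mul_zero]
    rw [card_insert_of_notMem (mem_compl.mp hk)]
    simpa using hJ

lemma contr_smul_left (f : S n) (Y : Fin n → S n) (τ : Ω n) :
    contr (f • Y) τ = f • contr Y τ := by
  funext J
  simp only [contr, Pi.smul_apply, smul_eq_mul, mul_sum]
  exact sum_congr rfl fun k _ => by ring

lemma smul_ofPoly (f g : S n) : f • ofPoly g = ofPoly (f * g) := by
  funext I
  simp [ofPoly, mul_ite]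

lemma wedge_ofPoly (μ : Ω n) (g : S n) : wedge μ (ofPoly g) = g • μ := by
  funext K
  rw [wedge, sum_eq_single K]
  · simp [sgnMerge, ofPoly, mul_comm]
  · intro I hI hne
    have : K \ I ≠ ∅ := fun hKI =>
      hne (Subset.antisymm (mem_powerset.mp hI) (sdiff_eq_empty_iff_subset.mp hKI))
    simp [ofPoly, this]
  · exact fun h => absurd (mem_powerset_self K) h

lemma extd_ofPoly_mul (p q : S n) :
    extd (ofPoly (p * q)) = p • extd (ofPoly q) + q • extd (ofPoly p) := by
  funext I
  simp only [extd, ofPoly, Pi.add_apply, Pi.smul_apply, smul_eq_mul, mul_sum, ← sum_add_distrib]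
  refine sum_congr rfl fun k _ => ?_
  split_ifs
  · rw [pderiv_mul]; ring
  · simp

lemma extd_ofPoly_singleton (g : S n) (k : Fin n) : extd (ofPoly g) {k} = pderiv k g := by
  simp [extd, ofPoly, filter_singleton]

lemma extd_pair (ω : Ω n) {k l : Fin n} (h : l ≠ k) :
    (-1 : S n) ^ (({k} : Finset (Fin n)).filter (fun j => j < l)).card * extd ω (insert l {k}) =
      pderiv l (ω {k}) - pderiv k (ω {l}) := by
  have hlk : l ∉ ({k} : Finset (Fin n)) := by simp [h]
  rw [extd, sum_insert hlk, sum_singleton, erase_insert hlk, erase_insert_of_ne h,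
    erase_singleton]
  rcases h.lt_or_gt with hlt | hlt <;>
  · simp [filter_insert, filter_singleton, hlt, not_lt_of_gt hlt]
    ring

lemma contr_extd_singleton (Y : Fin n → S n) (ω : Ω n) (k : Fin n) :
    contr Y (extd ω) {k} = ∑ l, Y l * (pderiv l (ω {k}) - pderiv k (ω {l})) := by
  rw [← sum_compl_add_sum {k}, sum_singleton, sub_self, mul_zero, add_zero]
  refine sum_congr rfl fun l hl => ?_
  rw [← extd_pair ω (by simpa using hl)]
  ring

lemma sum_X_mul_pderiv_eq_neg {w : Fin n → S n} (h : ∑ k, X k * w k = 0) (l : Fin n) :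
    ∑ k, X k * pderiv l (w k) = -w l := by
  have hd := congrArg (pderiv l) h
  simp only [map_sum, map_zero, Derivation.leibniz, smul_eq_mul, pderiv_X, Pi.single_apply,
    sum_add_distrib, mul_ite, mul_one, mul_zero, sum_ite_eq', mem_univ, if_true] at hd
  linear_combination hd

lemma sum_X_mul_contr_extd_singleton {ω : Ω n} {p : ℕ} (hrad : ∑ k, X k * ω {k} = 0)
    (hhom : ∀ k, (ω {k}).IsHomogeneous p) (Y : Fin n → S n) :
    ∑ k, X k * contr Y (extd ω) {k} = -((p + 1 : S n) * ∑ l, Y l * ω {l}) := by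
  have hswap : ∑ k, X k * contr Y (extd ω) {k} =
      ∑ l, Y l * ∑ k, X k * pderiv l (ω {k}) - ∑ l, Y l * ∑ k, X k * pderiv k (ω {l}) := by
    simp only [contr_extd_singleton, mul_sum, ← sum_sub_distrib]
    rw [sum_comm]
    exact sum_congr rfl fun l _ => sum_congr rfl fun k _ => by ring
  simp only [hswap, sum_X_mul_pderiv_eq_neg hrad, (hhom _).sum_X_mul_pderiv, nsmul_eq_mul,
    mul_sum, ← sum_add_distrib, ← sum_neg_distrib, sub_eq_add_neg]
  exact sum_congr rfl fun l _ => by ring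

lemma contr_radial_lieVF {ω : Ω n} {p b : ℕ} (hω : IsForm ω 1) (hrad : contr (radial n) ω = 0)
    (hhom : ∀ k, (ω {k}).IsHomogeneous p) {Y : Fin n → S n}
    (hY : ∀ k, (Y k).IsHomogeneous (b + 1)) :
    contr (radial n) (lieVF Y ω) = (b : S n) • contr Y ω := by
  have hradk : ∑ k, X k * ω {k} = 0 := by
    simpa [contr_eq_ofPoly_of_isForm_one hω, ofPoly, radial] using congrFun hrad ∅
  set g := ∑ l, Y l * ω {l}
  have hg : g.IsHomogeneous (p + b + 1) :=
    IsHomogeneous.sum _ _ _ fun l _ => by simpa [add_comm, add_assoc] using (hY l).mul (hhom l)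
  have hL : IsForm (lieVF Y ω) 1 := by
    intro I hI
    rw [lieVF, Pi.add_apply, (hω.extd.contr Y) I hI, contr_eq_ofPoly_of_isForm_one hω,
      (isForm_ofPoly g).extd I hI, add_zero]
  have hLk (k : Fin n) : lieVF Y ω {k} = contr Y (extd ω) {k} + pderiv k g := by
    rw [lieVF, contr_eq_ofPoly_of_isForm_one hω, Pi.add_apply, extd_ofPoly_singleton]
  rw [contr_eq_ofPoly_of_isForm_one hL, contr_eq_ofPoly_of_isForm_one hω, smul_ofPoly]
  congr 1
  simp only [radial, hLk, mul_add, sum_add_distrib, sum_X_mul_contr_extd_singleton hradk hhom,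
    hg.sum_X_mul_pderiv, nsmul_eq_mul]
  push_cast
  ring

lemma lieVF_smul_left {ω : Ω n} (hω : IsForm ω 1) (f : S n) (Y : Fin n → S n) :
    lieVF (f • Y) ω = f • lieVF Y ω + (∑ k, Y k * ω {k}) • extd (ofPoly f) := by
  rw [lieVF, lieVF, contr_smul_left, contr_smul_left, contr_eq_ofPoly_of_isForm_one hω,
    smul_ofPoly, extd_ofPoly_mul, smul_add, add_assoc]

theorem triOp_zeroth_differential_linearized_general (n a b c : ℕ) (ω : Ω n)
    (hω : IsHomogForm ω 1 a) (hrad : contr (radial n) ω = 0) (f : S n)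
    (Xv : Fin n → S n) (hX : ∀ k, (Xv k).IsHomogeneous (b + 1)) :
    ((b : ℂ) / ((b : ℂ) + (c : ℂ))) • lieVF (f • Xv) ω =
      ((b : ℂ) + (c : ℂ))⁻¹ •
        ((b : ℂ) • (f • lieVF Xv ω) +
          wedge (extd (ofPoly f)) (contr (radial n) (lieVF Xv ω))) := by
  -- for `a = 0` all coefficients vanish, so the truncation in `a - 1` is harmless
  have hcoeff (k : Fin n) : (ω {k}).IsHomogeneous (a - 1) := fun m hm => by
    have := hω.2 {k} m hm
    rw [card_singleton, ← Finsupp.degree_apply, Finsupp.degree_eq_weight_one, ← Pi.one_def]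
      at this
    omega
  rw [lieVF_smul_left hω.1, contr_radial_lieVF hω.1 hrad hcoeff hX,
    contr_eq_ofPoly_of_isForm_one hω.1, smul_ofPoly, wedge_ofPoly]
  funext I
  simp only [Pi.add_apply, Pi.smul_apply, smul_eq_mul, smul_eq_C_mul, div_eq_mul_inv, map_mul,
    C_eq_coe_nat]
  ring

/-- Let `ω ∈ Ω¹(a)` with `i_Rω = 0`, `ω∧dω = 0`, and let
`ω△X = L_Xω = i_X(dω) + d(i_Xω)` be the 0-th differential of the regularity complex.
With the actions `f·X = (b/(b+c))·fX` on `T(b)` (`b ≥ 1`) and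
`f ·_{ω△} τ = (1/(b'+c-a))·[(b'-a)·fτ + df∧i_Rτ]` on `Ω¹(b')` (the `ω△`-action with
`κ(1) = 1`; here `b' = a + b > a`), the operator `ω△` is linear:
`(b/(b+c))·L_{fX}(ω) = (1/(b+c))·[b·f·L_Xω + df∧i_R(L_Xω)]`. -/
theorem triOp_zeroth_differential_linearized (n a b c : ℕ) (hb : 1 ≤ b) (ω : Ω n)
    (hω : IsHomogForm ω 1 a) (hrad : contr (radial n) ω = 0)
    (hint : wedge ω (extd ω) = 0) (f : S n) (hf : f.IsHomogeneous c)
    (Xv : Fin n → S n) (hX : ∀ k, (Xv k).IsHomogeneous (b + 1)) :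
    ((b : ℂ) / ((b : ℂ) + (c : ℂ))) • lieVF (f • Xv) ω =
      ((b : ℂ) + (c : ℂ))⁻¹ •
        ((b : ℂ) • (f • lieVF Xv ω) +
          wedge (extd (ofPoly f)) (contr (radial n) (lieVF Xv ω))) :=
  triOp_zeroth_differential_linearized_general n a b c ω hω hrad f Xv hX
end
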